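/- For all non-negative integers n and k, the r-Stirling numbers of the second kind satisfy S_r(n+r, k+r) = sum_{j} binomial(n, j) * r^{n-j} * S(j, k) summed over j from k to n, relating them to ordinary Stirling numbers via the e^{rt} factor in the generating function. -/

import Mathlib

open Finset Real

/-- Stirling numbers of the second kind `S(n, k)`. -/
def stirling2 : ℕ → ℕ → ℕ
  | 0, 0 => 1
  | 0, _ + 1 => 0
  | _ + 1, 0 => 0
  | n + 1, k + 1 => (k + 1) * stirling2 n (k + 1) + stirling2 n k

/-- The `r`-Stirling numbers of the second kind `S_r(n, k)` of Broder: the number of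
partitions of `{1, …, n}` into `k` non-empty subsets such that `1, …, r` lie in
distinct subsets (with the convention `S_r(n, k) = 0` for `n < r`). -/
def rStirling (r : ℕ) : ℕ → ℕ → ℕ
  | 0, k => if r = 0 ∧ k = 0 then 1 else 0
  | n + 1, k =>
    if n + 1 < r then 0
    else if n + 1 = r then (if k = r then 1 else 0)
    else
      match k with
      | 0 => 0
      | k + 1 => (k + 1) * rStirling r n (k + 1) + rStirling r n k

/-!
Both sides satisfy the recurrence `T(n+1, k) = (k + r) T(n, k) + T(n, k-1)` with `T(0, k) = [k = 0]`.
For the left side this is the defining recurrence of `S_r`, shifted by `r`. For the right side it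
follows from Pascal's rule `C(n+1, j) = C(n, j) + C(n, j-1)`: the binomial transform with weight
`r` turns the index shift `j ↦ j + 1` into a shift `n ↦ n + 1` plus a factor `r`, and the
recurrence of `S(j + 1, k)` supplies the remaining `k T(n, k) + T(n, k-1)`.
-/

theorem stirling2_eq_zero_of_lt : ∀ {n k : ℕ}, n < k → stirling2 n k = 0
  | 0, _ + 1, _ => rfl
  | n + 1, k + 1, h => by
    rw [stirling2, stirling2_eq_zero_of_lt (by omega), stirling2_eq_zero_of_lt (by omega),
      mul_zero]

theorem rStirling_eq_zero_of_lt {r k : ℕ} (n : ℕ) (hk : k < r) : rStirling r n k = 0 := by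
  induction n generalizing k with
  | zero => simp [rStirling]; omega
  | succ n ih =>
    rcases k with _ | k
    · simp [rStirling, hk.ne]
    · simp [rStirling, hk.ne, ih hk, ih (k := k) (by omega)]

theorem rStirling_succ_succ {r n : ℕ} (k : ℕ) (h : r ≤ n) :
    rStirling r (n + 1) (k + 1) = (k + 1) * rStirling r n (k + 1) + rStirling r n k := by
  simp [rStirling, show ¬n + 1 < r by omega, show n + 1 ≠ r by omega]

theorem rStirling_succ_self {r n : ℕ} (h : r ≤ n) :
    rStirling r (n + 1) r = r * rStirling r n r := by
  rcases r with _ | r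
  · simp [rStirling]
  · rw [rStirling_succ_succ r h, rStirling_eq_zero_of_lt n r.lt_succ_self, add_zero]

theorem sum_range_choose_succ_mul_pow_mul {R : Type*} [CommSemiring R] (a : R) (g : ℕ → R)
    (n : ℕ) :
    ∑ j ∈ range (n + 2), ((n + 1).choose j : R) * a ^ (n + 1 - j) * g j =
      a * ∑ j ∈ range (n + 1), (n.choose j : R) * a ^ (n - j) * g j +
        ∑ j ∈ range (n + 1), (n.choose j : R) * a ^ (n - j) * g (j + 1) := by
  simp_rw [mul_assoc]
  rw [sum_choose_succ_mul (fun j m => a ^ m * g j), mul_sum]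
  congr 1
  refine sum_congr rfl fun j hj => ?_
  rw [Nat.sub_add_comm (Nat.lt_succ_iff.mp (mem_range.mp hj)), pow_succ]
  ring

theorem rStirling_add_eq_sum_range (r n k : ℕ) :
    rStirling r (n + r) (k + r) =
      ∑ j ∈ range (n + 1), n.choose j * r ^ (n - j) * stirling2 j k := by
  induction n generalizing k with
  | zero =>
    rcases r with _ | r <;> rcases k with _ | k <;> simp [rStirling, stirling2]
  | succ n ih =>
    have hsum := sum_range_choose_succ_mul_pow_mul r (fun j => stirling2 j k) n
    simp only [Nat.cast_id] at hsum
    rw [Nat.add_right_comm, hsum]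
    rcases k with _ | k
    · have h0 := ih 0
      rw [zero_add] at h0
      simp only [zero_add, rStirling_succ_self (Nat.le_add_left r n), h0, stirling2, mul_zero,
        sum_const_zero, add_zero]
    · rw [Nat.add_right_comm k 1 r, rStirling_succ_succ _ (by omega), ih, ← Nat.add_right_comm k 1 r,
        ih]
      simp only [stirling2, mul_add, sum_add_distrib, mul_left_comm _ (k + 1), ← mul_sum]
      ring

theorem rStirling_eq_sum_choose_stirling2 (n k r : ℕ) :
    rStirling r (n + r) (k + r) =
      ∑ j ∈ Finset.Icc k n, Nat.choose n j * r ^ (n - j) * stirling2 j k := by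
  rw [rStirling_add_eq_sum_range, range_eq_Ico]
  refine (sum_subset (fun j hj => ?_) (fun j hj hj' => ?_)).symm
  · simp only [mem_Icc, mem_Ico] at hj ⊢
    omega
  · simp only [mem_Icc, mem_Ico, not_and, not_le] at hj hj'
    rw [stirling2_eq_zero_of_lt (by omega), mul_zero]
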